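/- Let n ∈ ℤ and ℓ ≥ 0 be integers with n + ℓ < 0, set a = −n−ℓ, and let λ ∈ ℂ. Let W be the vector space of all sequences (H_j)_{j≥0} in ℂ^{ℓ+1} satisfying recursion (R1) and H_j = 0 for all j < a. Then every (H_j) ∈ W satisfies H_{i,a+k} = 0 for all 0 ≤ k ≤ ℓ−1 and all k+1 ≤ i ≤ ℓ, and the linear map sending (H_j) to (H_{0,a}, H_{1,a+1}, …, H_{ℓ,a+ℓ}) is a bijection from W onto ℂ^{ℓ+1}. -/
import Mathlib


open Matrix

noncomputable def matA0 (n : ℤ) (ℓ : ℕ) : Matrix (Fin (ℓ + 1)) (Fin (ℓ + 1)) ℂ :=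
  Matrix.diagonal fun i => (n : ℂ) + ℓ - i + 1

noncomputable def matA1 (n : ℤ) (ℓ : ℕ) : Matrix (Fin (ℓ + 1)) (Fin (ℓ + 1)) ℂ :=
  Matrix.diagonal fun i => (n : ℂ) + ℓ - i + 3

noncomputable def matB0 (ℓ : ℕ) : Matrix (Fin (ℓ + 1)) (Fin (ℓ + 1)) ℂ :=
  Matrix.of fun i j => ((i : ℂ) + 1) * ((ℓ : ℂ) - i) *
    ((if (j : ℕ) = (i : ℕ) + 1 then 1 else 0) - if j = i then 1 else 0)

noncomputable def matB1 (ℓ : ℕ) : Matrix (Fin (ℓ + 1)) (Fin (ℓ + 1)) ℂ :=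
  Matrix.of fun i j => (i : ℂ) * ((ℓ : ℂ) - i + 1) *
    ((if j = i then 1 else 0) - if (j : ℕ) + 1 = (i : ℕ) then 1 else 0)

/-- Recursion (R1), with the convention `H_{−1} = 0`. -/
def RecR1 (n : ℤ) (ℓ : ℕ) (lam : ℂ) (H : ℕ → Fin (ℓ + 1) → ℂ) : Prop :=
  ∀ j : ℕ,
    (((((j : ℂ) - 1) * ((j : ℂ) - 2) + lam) • (1 : Matrix (Fin (ℓ + 1)) (Fin (ℓ + 1)) ℂ)
        + ((j : ℂ) - 1) • matA1 n ℓ - matB1 ℓ).mulVec (if j = 0 then 0 else H (j - 1)))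
      - (((2 * (j : ℂ) * ((j : ℂ) - 1) + lam) • (1 : Matrix (Fin (ℓ + 1)) (Fin (ℓ + 1)) ℂ)
        + (j : ℂ) • (matA0 n ℓ + matA1 n ℓ) - matB0 ℓ).mulVec (H j))
      + ((((j : ℂ) + 1) • ((j : ℂ) • (1 : Matrix (Fin (ℓ + 1)) (Fin (ℓ + 1)) ℂ)
        + matA0 n ℓ)).mulVec (H (j + 1))) = 0

namespace S17

/-- component above: `v (i+1)` or `0` if out of range -/
def up (ℓ : ℕ) (v : Fin (ℓ+1) → ℂ) (i : Fin (ℓ+1)) : ℂ :=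
  if h : (i:ℕ)+1 < ℓ+1 then v ⟨(i:ℕ)+1, h⟩ else 0

/-- component below: `v (i-1)` or `0` if `i = 0` -/
def dn (ℓ : ℕ) (v : Fin (ℓ+1) → ℂ) (i : Fin (ℓ+1)) : ℂ :=
  if 0 < (i:ℕ) then v ⟨(i:ℕ)-1, Nat.lt_of_le_of_lt (Nat.sub_le _ _) i.isLt⟩ else 0

noncomputable def cA (n : ℤ) (ℓ : ℕ) (lam : ℂ) (j i : ℂ) : ℂ :=
  (j-1)*(j-2) + lam + (j-1)*((n:ℂ)+(ℓ:ℂ)-i+3) - i*((ℓ:ℂ)-i+1)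
noncomputable def cB (ℓ : ℕ) (i : ℂ) : ℂ := i*((ℓ:ℂ)-i+1)
noncomputable def cG (n : ℤ) (ℓ : ℕ) (lam : ℂ) (j i : ℂ) : ℂ :=
  2*j*(j-1) + lam + j*(((n:ℂ)+(ℓ:ℂ)-i+1) + ((n:ℂ)+(ℓ:ℂ)-i+3)) + (i+1)*((ℓ:ℂ)-i)
noncomputable def cD (ℓ : ℕ) (i : ℂ) : ℂ := (i+1)*((ℓ:ℂ)-i)
noncomputable def cE (n : ℤ) (ℓ : ℕ) (j i : ℂ) : ℂ := (j+1)*(j+((n:ℂ)+(ℓ:ℂ)-i+1))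

/-- The scalar form of recursion (R1), component `i` of step `j`. -/
def SEq (n : ℤ) (ℓ : ℕ) (lam : ℂ) (H : ℕ → Fin (ℓ+1) → ℂ) (j : ℕ) (i : Fin (ℓ+1)) : Prop :=
  cA n ℓ lam (j:ℂ) ((i:ℕ):ℂ) * (if j = 0 then 0 else H (j-1)) i
  + cB ℓ ((i:ℕ):ℂ) * dn ℓ (if j = 0 then 0 else H (j-1)) i
  - cG n ℓ lam (j:ℂ) ((i:ℕ):ℂ) * H j i
  + cD ℓ ((i:ℕ):ℂ) * up ℓ (H j) i
  + cE n ℓ (j:ℂ) ((i:ℕ):ℂ) * H (j+1) i = 0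

lemma sum_ind {ℓ : ℕ} (v : Fin (ℓ+1) → ℂ) (m : ℕ) :
    (∑ j : Fin (ℓ+1), (if (j:ℕ) = m then v j else 0))
      = if h : m < ℓ+1 then v ⟨m, h⟩ else 0 := by
  split_ifs with h
  · rw [Finset.sum_eq_single (⟨m, h⟩ : Fin (ℓ+1))]
    · simp
    · intro b _ hb
      rw [if_neg]
      exact fun hbm => hb (Fin.ext hbm)
    · simp
  · apply Finset.sum_eq_zero
    intro j _
    rw [if_neg]
    exact fun hj => h (hj ▸ j.isLt)

lemma mulVec_matA0 {n : ℤ} {ℓ : ℕ} (v : Fin (ℓ+1) → ℂ) (i : Fin (ℓ+1)) :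
    (matA0 n ℓ).mulVec v i = ((n:ℂ)+(ℓ:ℂ)-((i:ℕ):ℂ)+1) * v i := by
  simp [matA0, Matrix.mulVec_diagonal]

lemma mulVec_matA1 {n : ℤ} {ℓ : ℕ} (v : Fin (ℓ+1) → ℂ) (i : Fin (ℓ+1)) :
    (matA1 n ℓ).mulVec v i = ((n:ℂ)+(ℓ:ℂ)-((i:ℕ):ℂ)+3) * v i := by
  simp [matA1, Matrix.mulVec_diagonal]

lemma mulVec_matB0 {ℓ : ℕ} (v : Fin (ℓ+1) → ℂ) (i : Fin (ℓ+1)) :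
    (matB0 ℓ).mulVec v i = cD ℓ ((i:ℕ):ℂ) * (up ℓ v i - v i) := by
  have h1 : (matB0 ℓ).mulVec v i
      = (∑ j : Fin (ℓ+1), (if (j:ℕ) = (i:ℕ)+1 then cD ℓ ((i:ℕ):ℂ) * v j else 0))
        - (∑ j : Fin (ℓ+1), (if j = i then cD ℓ ((i:ℕ):ℂ) * v j else 0)) := by
    rw [← Finset.sum_sub_distrib]
    simp only [Matrix.mulVec, dotProduct, matB0, Matrix.of_apply]
    apply Finset.sum_congr rfl
    intro j _
    simp only [cD]
    split_ifs <;> ring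
  rw [h1]
  have h2 : (∑ j : Fin (ℓ+1), (if (j:ℕ) = (i:ℕ)+1 then cD ℓ ((i:ℕ):ℂ) * v j else 0))
      = cD ℓ ((i:ℕ):ℂ) * up ℓ v i := by
    have := sum_ind (fun j => cD ℓ ((i:ℕ):ℂ) * v j) ((i:ℕ)+1)
    rw [this]
    unfold up
    split_ifs <;> simp
  rw [h2, Finset.sum_ite_eq' Finset.univ i]
  simp; ring

lemma mulVec_matB1 {ℓ : ℕ} (v : Fin (ℓ+1) → ℂ) (i : Fin (ℓ+1)) :
    (matB1 ℓ).mulVec v i = cB ℓ ((i:ℕ):ℂ) * (v i - dn ℓ v i) := by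
  have h1 : (matB1 ℓ).mulVec v i
      = (∑ j : Fin (ℓ+1), (if j = i then cB ℓ ((i:ℕ):ℂ) * v j else 0))
        - (∑ j : Fin (ℓ+1), (if (j:ℕ) = (i:ℕ)-1 ∧ 0 < (i:ℕ) then cB ℓ ((i:ℕ):ℂ) * v j else 0)) := by
    rw [← Finset.sum_sub_distrib]
    simp only [Matrix.mulVec, dotProduct, matB1, Matrix.of_apply]
    apply Finset.sum_congr rfl
    intro j _
    have : ((j:ℕ)+1 = (i:ℕ)) ↔ ((j:ℕ) = (i:ℕ)-1 ∧ 0 < (i:ℕ)) := by omega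
    simp only [cB, ← this]
    split_ifs <;> ring
  rw [h1, Finset.sum_ite_eq' Finset.univ i]
  have h2 : (∑ j : Fin (ℓ+1), (if (j:ℕ) = (i:ℕ)-1 ∧ 0 < (i:ℕ) then cB ℓ ((i:ℕ):ℂ) * v j else 0))
      = cB ℓ ((i:ℕ):ℂ) * dn ℓ v i := by
    by_cases hi : 0 < (i:ℕ)
    · have : ∀ j : Fin (ℓ+1), (if (j:ℕ) = (i:ℕ)-1 ∧ 0 < (i:ℕ) then cB ℓ ((i:ℕ):ℂ) * v j else 0)
          = (if (j:ℕ) = (i:ℕ)-1 then cB ℓ ((i:ℕ):ℂ) * v j else 0) := by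
        intro j; simp [hi]
      rw [Finset.sum_congr rfl (fun j _ => this j), sum_ind (fun j => cB ℓ ((i:ℕ):ℂ) * v j) ((i:ℕ)-1)]
      rw [dif_pos (Nat.lt_of_le_of_lt (Nat.sub_le _ _) i.isLt)]
      unfold dn
      rw [if_pos hi]
    · have : ∀ j : Fin (ℓ+1), (if (j:ℕ) = (i:ℕ)-1 ∧ 0 < (i:ℕ) then cB ℓ ((i:ℕ):ℂ) * v j else 0) = 0 := by
        intro j; simp [hi]
      rw [Finset.sum_congr rfl (fun j _ => this j), Finset.sum_const_zero]
      unfold dn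
      rw [if_neg hi, mul_zero]
  rw [h2]
  simp; ring

lemma recR1_iff {n : ℤ} {ℓ : ℕ} {lam : ℂ} (H : ℕ → Fin (ℓ+1) → ℂ) :
    RecR1 n ℓ lam H ↔ ∀ (j : ℕ) (i : Fin (ℓ+1)), SEq n ℓ lam H j i := by
  constructor
  · intro h j i
    have h2 := congrFun (h j) i
    simp only [Pi.add_apply, Pi.sub_apply, Pi.zero_apply, Matrix.add_mulVec,
      Matrix.sub_mulVec, Matrix.smul_mulVec, Matrix.one_mulVec,
      mulVec_matA0, mulVec_matA1, mulVec_matB0, mulVec_matB1,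
      Pi.smul_apply, smul_eq_mul] at h2
    unfold SEq cA cB cG cD cE
    unfold cD cB at h2
    linear_combination h2
  · intro h j
    funext i
    have h2 := h j i
    unfold SEq cA cB cG cD cE at h2
    simp only [Pi.add_apply, Pi.sub_apply, Pi.zero_apply, Matrix.add_mulVec,
      Matrix.sub_mulVec, Matrix.smul_mulVec, Matrix.one_mulVec,
      mulVec_matA0, mulVec_matA1, mulVec_matB0, mulVec_matB1,
      Pi.smul_apply, smul_eq_mul]
    unfold cD cB
    linear_combination h2

end S17

namespace S17

noncomputable def nextF (n : ℤ) (ℓ : ℕ) (lam : ℂ) (c : Fin (ℓ+1) → ℂ) (a : ℕ)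
    (m : ℕ) (Hp Hc : Fin (ℓ+1) → ℂ) : Fin (ℓ+1) → ℂ := fun i =>
  if m < a then 0
  else if m = a + (i:ℕ) then c i
  else (cG n ℓ lam ((m:ℂ)-1) ((i:ℕ):ℂ) * Hc i - cD ℓ ((i:ℕ):ℂ) * up ℓ Hc i
        - cA n ℓ lam ((m:ℂ)-1) ((i:ℕ):ℂ) * Hp i - cB ℓ ((i:ℕ):ℂ) * dn ℓ Hp i)
       / cE n ℓ ((m:ℂ)-1) ((i:ℕ):ℂ)

noncomputable def sol (n : ℤ) (ℓ : ℕ) (lam : ℂ) (c : Fin (ℓ+1) → ℂ) (a : ℕ) :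
    ℕ → Fin (ℓ+1) → ℂ
  | 0 => 0
  | 1 => nextF n ℓ lam c a 1 0 0
  | (j+2) => nextF n ℓ lam c a (j+2) (sol n ℓ lam c a j) (sol n ℓ lam c a (j+1))

lemma sol_zero (n : ℤ) (ℓ : ℕ) (lam : ℂ) (c : Fin (ℓ+1) → ℂ) (a : ℕ) :
    sol n ℓ lam c a 0 = 0 := by simp [sol]

lemma sol_eq (n : ℤ) (ℓ : ℕ) (lam : ℂ) (c : Fin (ℓ+1) → ℂ) (a : ℕ)
    (m : ℕ) (hm : 1 ≤ m) :
    sol n ℓ lam c a m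
      = nextF n ℓ lam c a m (sol n ℓ lam c a (m-2)) (sol n ℓ lam c a (m-1)) := by
  match m, hm with
  | 1, _ => simp [sol]
  | (k+2), _ => simp [sol]

end S17

namespace S17

variable {n : ℤ} {ℓ : ℕ} {lam : ℂ} {a : ℕ}

lemma cast_nl (hA : (a:ℤ) = -n - ℓ) : (n:ℂ) + (ℓ:ℂ) = -(a:ℂ) := by
  have h2 : ((a:ℤ):ℂ) = -(n:ℂ) - (ℓ:ℂ) := by rw [hA]; push_cast; ring
  push_cast at h2
  linear_combination h2

lemma cE_zero (hA : (a:ℤ) = -n - ℓ) (j : ℕ) (i : Fin (ℓ+1)) (h : j + 1 = a + (i:ℕ)) :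
    cE n ℓ (j:ℂ) ((i:ℕ):ℂ) = 0 := by
  have hnl := cast_nl hA
  have hc : ((j:ℕ):ℂ) + 1 = ((a:ℕ):ℂ) + ((i:ℕ):ℂ) := by exact_mod_cast congrArg (fun t : ℕ => (t:ℂ)) h
  unfold cE
  have : (j:ℂ) + ((n:ℂ)+(ℓ:ℂ)-((i:ℕ):ℂ)+1) = 0 := by
    rw [hnl]; linear_combination hc
  rw [this, mul_zero]

lemma cE_ne (hA : (a:ℤ) = -n - ℓ) (j : ℕ) (i : Fin (ℓ+1)) (h : j + 1 ≠ a + (i:ℕ)) :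
    cE n ℓ (j:ℂ) ((i:ℕ):ℂ) ≠ 0 := by
  have hnl := cast_nl hA
  unfold cE
  apply mul_ne_zero (Nat.cast_add_one_ne_zero j)
  intro h0
  apply h
  have : ((j + 1 : ℕ) : ℂ) = ((a + (i:ℕ) : ℕ) : ℂ) := by
    push_cast
    rw [hnl] at h0
    linear_combination h0
  exact_mod_cast this

lemma sol_vanish (hA : (a:ℤ) = -n - ℓ) (ha1 : 1 ≤ a) (c : Fin (ℓ+1) → ℂ) :
    ∀ (j : ℕ) (i : Fin (ℓ+1)), j < a + (i:ℕ) → sol n ℓ lam c a j i = 0 := by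
  intro j
  induction j using Nat.strong_induction_on with
  | _ j IH =>
    intro i hji
    match j with
    | 0 => simp [sol]
    | (m+1) =>
      rw [sol_eq n ℓ lam c a (m+1) (by omega)]
      unfold nextF
      split_ifs with h1 h2
      · rfl
      · omega
      · have e1 : sol n ℓ lam c a (m+1-1) i = 0 := IH (m+1-1) (by omega) i (by omega)
        have e2 : up ℓ (sol n ℓ lam c a (m+1-1)) i = 0 := by
          unfold up
          split_ifs with h
          · exact IH (m+1-1) (by omega) ⟨(i:ℕ)+1, h⟩ (by simp; omega)
          · rfl
        have e3 : sol n ℓ lam c a (m+1-2) i = 0 := IH (m+1-2) (by omega) i (by omega)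
        have e4 : dn ℓ (sol n ℓ lam c a (m+1-2)) i = 0 := by
          unfold dn
          split_ifs with h
          · exact IH (m+1-2) (by omega) ⟨(i:ℕ)-1, _⟩ (by simp; omega)
          · rfl
        rw [e1, e2, e3, e4]
        simp

lemma sol_recR1 (hA : (a:ℤ) = -n - ℓ) (ha1 : 1 ≤ a) (c : Fin (ℓ+1) → ℂ) :
    RecR1 n ℓ lam (sol n ℓ lam c a) := by
  rw [recR1_iff]
  intro j i
  unfold SEq
  have hP : (if j = 0 then 0 else sol n ℓ lam c a (j-1)) = sol n ℓ lam c a (j-1) := by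
    split_ifs with h
    · subst h; exact (sol_zero n ℓ lam c a).symm
    · rfl
  rw [hP]
  have hR : sol n ℓ lam c a (j+1)
      = nextF n ℓ lam c a (j+1) (sol n ℓ lam c a (j-1)) (sol n ℓ lam c a j) := by
    rw [sol_eq n ℓ lam c a (j+1) (by omega),
      show j + 1 - 2 = j - 1 by omega, show j + 1 - 1 = j by omega]
  rw [hR]
  have hcast : ((j+1:ℕ):ℂ) - 1 = (j:ℂ) := by push_cast; ring
  unfold nextF
  rw [hcast]
  split_ifs with h1 h2
  · -- j+1 < a : everything vanishes
    have e0 : sol n ℓ lam c a j i = 0 := sol_vanish hA ha1 c j i (by omega)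
    have e1 : sol n ℓ lam c a (j-1) i = 0 := sol_vanish hA ha1 c (j-1) i (by omega)
    have e2 : up ℓ (sol n ℓ lam c a j) i = 0 := by
      unfold up; split_ifs with h
      · exact sol_vanish hA ha1 c j ⟨(i:ℕ)+1, h⟩ (by simp; omega)
      · rfl
    have e3 : dn ℓ (sol n ℓ lam c a (j-1)) i = 0 := by
      unfold dn; split_ifs with h
      · exact sol_vanish hA ha1 c (j-1) ⟨(i:ℕ)-1, _⟩ (by simp; omega)
      · rfl
    rw [e0, e1, e2, e3]
    ring
  · -- j+1 = a + i : free coefficient, consistency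
    have e0 : sol n ℓ lam c a j i = 0 := sol_vanish hA ha1 c j i (by omega)
    have e1 : sol n ℓ lam c a (j-1) i = 0 := sol_vanish hA ha1 c (j-1) i (by omega)
    have e2 : up ℓ (sol n ℓ lam c a j) i = 0 := by
      unfold up; split_ifs with h
      · exact sol_vanish hA ha1 c j ⟨(i:ℕ)+1, h⟩ (by simp; omega)
      · rfl
    have e3 : dn ℓ (sol n ℓ lam c a (j-1)) i = 0 := by
      unfold dn; split_ifs with h
      · exact sol_vanish hA ha1 c (j-1) ⟨(i:ℕ)-1, _⟩ (by simp; omega)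
      · rfl
    rw [e0, e1, e2, e3, cE_zero hA j i h2]
    ring
  · -- generic step
    have hcE : cE n ℓ (j:ℂ) ((i:ℕ):ℂ) ≠ 0 := cE_ne hA j i h2
    rw [mul_div_cancel₀ _ hcE]
    ring

lemma sol_unique (hA : (a:ℤ) = -n - ℓ) (ha1 : 1 ≤ a)
    (H : ℕ → Fin (ℓ+1) → ℂ) (hH : RecR1 n ℓ lam H)
    (h0 : ∀ j : ℕ, j < a → H j = 0) :
    ∀ j, H j = sol n ℓ lam (fun i => H (a + (i:ℕ)) i) a j := by
  set c : Fin (ℓ+1) → ℂ := fun i => H (a + (i:ℕ)) i with hc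
  intro j
  induction j using Nat.strong_induction_on with
  | _ j IH =>
    match j with
    | 0 => rw [h0 0 (by omega), sol_zero]
    | (m+1) =>
      set j := m+1
      funext i
      rw [sol_eq n ℓ lam c a j (by omega)]
      unfold nextF
      split_ifs with h1 h2
      · exact congrFun (h0 j h1) i
      · show H j i = c i
        rw [hc]
        simp only []
        rw [← h2]
      · -- use the recursion for H at step j-1
        have hsc := (recR1_iff H).mp hH (j-1) i
        unfold SEq at hsc
        rw [show j - 1 + 1 = j by omega] at hsc
        have hPP : (if j-1 = 0 then (0 : Fin (ℓ+1) → ℂ) else H (j-1-1)) = H (j-2) := by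
          split_ifs with h'
          · rw [h0 (j-2) (by omega)]
          · rw [show j-1-1 = j-2 by omega]
        rw [hPP] at hsc
        have hcast : ((j-1:ℕ):ℂ) = (j:ℂ) - 1 := by
          rw [Nat.cast_sub (by omega : 1 ≤ j)]; simp
        rw [hcast] at hsc
        have hcE : cE n ℓ ((j:ℂ)-1) ((i:ℕ):ℂ) ≠ 0 := by
          have := cE_ne hA (j-1) i (by omega)
          rwa [hcast] at this
        rw [← IH (j-1) (by omega), ← IH (j-2) (by omega)]
        rw [eq_div_iff hcE]
        linear_combination hsc

end S17

/-- For `n + ℓ < 0` and `a = −n−ℓ`: every solution of (R1) vanishing below degree `a`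
satisfies `H_{i,a+k} = 0` for `0 ≤ k ≤ ℓ−1`, `k+1 ≤ i ≤ ℓ`, and the map
`H ↦ (H_{0,a}, H_{1,a+1}, …, H_{ℓ,a+ℓ})` is a bijection from the space of all such
solutions onto `ℂ^{ℓ+1}`. -/

theorem stmt17 (n : ℤ) (ℓ : ℕ) (hnl : n + (ℓ : ℤ) < 0) (lam : ℂ) :
    (∀ H : ℕ → Fin (ℓ + 1) → ℂ, RecR1 n ℓ lam H →
      (∀ j : ℕ, (j : ℤ) < -n - ℓ → H j = 0) →
      ∀ k : ℕ, k + 1 ≤ ℓ → ∀ i : Fin (ℓ + 1), k + 1 ≤ (i : ℕ) →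
        H ((-n - ℓ).toNat + k) i = 0) ∧
    Function.Bijective
      (fun H : {H : ℕ → Fin (ℓ + 1) → ℂ //
          RecR1 n ℓ lam H ∧ ∀ j : ℕ, (j : ℤ) < -n - ℓ → H j = 0} =>
        fun i : Fin (ℓ + 1) => H.1 ((-n - ℓ).toNat + (i : ℕ)) i) := by
  set a := (-n - (ℓ:ℤ)).toNat with hadef
  have hA : (a : ℤ) = -n - ℓ := Int.toNat_of_nonneg (by omega)
  have ha1 : 1 ≤ a := by omega
  have h0' : ∀ H : ℕ → Fin (ℓ+1) → ℂ, (∀ j : ℕ, (j:ℤ) < -n - ℓ → H j = 0) →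
      ∀ j, j < a → H j = 0 := by
    intro H h j hj
    exact h j (by omega)
  constructor
  · intro H hR h0 k hk i hi
    rw [congrFun (S17.sol_unique hA ha1 H hR (h0' H h0) (a+k)) i]
    exact S17.sol_vanish hA ha1 _ (a+k) i (by omega)
  · constructor
    · rintro ⟨H1, hR1, h01⟩ ⟨H2, hR2, h02⟩ hEq
      apply Subtype.ext
      funext j
      simp only at hEq ⊢
      rw [S17.sol_unique hA ha1 H1 hR1 (h0' H1 h01) j,
          S17.sol_unique hA ha1 H2 hR2 (h0' H2 h02) j, hEq]
    · intro c
      refine ⟨⟨S17.sol n ℓ lam c a, S17.sol_recR1 hA ha1 c, ?_⟩, ?_⟩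
      · intro j hj
        funext i
        exact S17.sol_vanish hA ha1 c j i (by omega)
      · funext i
        show S17.sol n ℓ lam c a (a + (i:ℕ)) i = c i
        rw [S17.sol_eq n ℓ lam c a (a + (i:ℕ)) (by omega)]
        unfold S17.nextF
        rw [if_neg (by omega), if_pos rfl]
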